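/- arXiv:2010.11858 — 3 statements merged into one kernel-verified Lean document; each statement's English description precedes it below -/
import Mathlib

section
/- Let A be a compact set with finite positive Lebesgue measure, and let f, f' : A → ℝ be measurable with ‖f‖_∞, ‖f'‖_∞ ≤ M. Let Z(f) = ∫_A exp(f(a)) da. Then |log(Z(f)/Z(f'))| ≤ e^{2M} · K · ‖f - f'‖_{L²(A)} / |A|^{1/2} for a constant K depending only on M (where K is a Lipschitz constant for exp on [-2M, 2M]). -/
/-!
Both partition functions are at least `e^{-M} |A|`, where `log` is `e^{M} |A|⁻¹`-Lipschitz.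
Since `exp` is `e^{M}`-Lipschitz on `(-∞, M]`, `|Z(f) - Z(f')| ≤ e^{M} ‖f - f'‖₁`, and
Cauchy–Schwarz gives `‖f - f'‖₁ ≤ |A|^{1/2} ‖f - f'‖₂`; the factors `e^{±M}` combine into
`e^{2M}`. The constant `K = e^{2M} ≥ 1` is a Lipschitz constant of `exp` on `[-2M, 2M]`.
-/

open MeasureTheory Real

lemma abs_exp_sub_exp_le_of_le {B x y : ℝ} (hx : x ≤ B) (hy : y ≤ B) :
    |exp x - exp y| ≤ exp B * |x - y| := by
  simpa [Real.norm_eq_abs] using (convex_Iic B).norm_image_sub_le_of_norm_deriv_le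
    (fun _ _ => differentiableAt_exp) (fun z hz => by simpa using exp_le_exp.2 hz) hy hx

lemma abs_log_sub_log_le_of_le {c a b : ℝ} (hc : 0 < c) (ha : c ≤ a) (hb : c ≤ b) :
    |log a - log b| ≤ c⁻¹ * |a - b| := by
  have hderiv : ∀ z ∈ Set.Ici c, ‖deriv log z‖ ≤ c⁻¹ := fun z hz => by
    rw [deriv_log, norm_inv, Real.norm_of_nonneg (hc.trans_le hz).le]
    exact inv_anti₀ hc hz
  simpa [Real.norm_eq_abs] using (convex_Ici c).norm_image_sub_le_of_norm_deriv_le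
    (fun z hz => differentiableAt_log (hc.trans_le hz).ne') hderiv hb ha

lemma integral_abs_le_sqrt_measureReal_mul_sqrt_integral_sq {α : Type*} [MeasurableSpace α]
    {μ : Measure α} [IsFiniteMeasure μ] {g : α → ℝ} (hg : MemLp g 2 μ) :
    ∫ a, |g a| ∂μ ≤ √(μ.real Set.univ) * √(∫ a, g a ^ 2 ∂μ) := by
  have h := integral_mul_le_Lp_mul_Lq_of_nonneg (μ := μ) Real.HolderConjugate.two_two
    (f := fun _ => (1 : ℝ)) (g := fun a => |g a|) (Filter.Eventually.of_forall fun _ => zero_le_one)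
    (Filter.Eventually.of_forall fun a => abs_nonneg (g a)) (memLp_const 1)
    (by simpa using hg.norm)
  simpa [sqrt_eq_rpow, Real.rpow_two, sq_abs] using h

section PartitionFunction

variable {α : Type*} [MeasurableSpace α] {μ : Measure α} [IsFiniteMeasure μ] {M : ℝ}
  {f f' : α → ℝ}

lemma integrable_exp_of_ae_abs_le (hf : AEStronglyMeasurable f μ)
    (hfM : ∀ᵐ a ∂μ, |f a| ≤ M) : Integrable (fun a => exp (f a)) μ :=
  .of_bound (continuous_exp.comp_aestronglyMeasurable hf) (exp M) <| by
    filter_upwards [hfM] with a ha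
    simpa using (le_abs_self _).trans ha

lemma exp_neg_mul_measureReal_univ_le_integral_exp (hf : AEStronglyMeasurable f μ)
    (hfM : ∀ᵐ a ∂μ, |f a| ≤ M) : exp (-M) * μ.real Set.univ ≤ ∫ a, exp (f a) ∂μ := by
  calc exp (-M) * μ.real Set.univ = ∫ _, exp (-M) ∂μ := by
        rw [integral_const, smul_eq_mul, mul_comm]
    _ ≤ ∫ a, exp (f a) ∂μ := integral_mono_ae (integrable_const _)
        (integrable_exp_of_ae_abs_le hf hfM) <| by
          filter_upwards [hfM] with a ha
          exact exp_le_exp.2 (neg_le_of_abs_le ha)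

lemma abs_integral_exp_sub_integral_exp_le (hf : AEStronglyMeasurable f μ)
    (hf' : AEStronglyMeasurable f' μ) (hfM : ∀ᵐ a ∂μ, |f a| ≤ M) (hf'M : ∀ᵐ a ∂μ, |f' a| ≤ M) :
    |∫ a, exp (f a) ∂μ - ∫ a, exp (f' a) ∂μ| ≤ exp M * ∫ a, |f a - f' a| ∂μ := by
  have hexp := integrable_exp_of_ae_abs_le hf hfM
  have hexp' := integrable_exp_of_ae_abs_le hf' hf'M
  have hint : Integrable f μ := .of_bound hf M (by simpa using hfM)
  have hint' : Integrable f' μ := .of_bound hf' M (by simpa using hf'M)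
  rw [← integral_sub hexp hexp', ← integral_const_mul]
  refine abs_integral_le_integral_abs.trans <|
    integral_mono_ae (hexp.sub hexp').abs ((hint.sub hint').abs.const_mul _) ?_
  filter_upwards [hfM, hf'M] with a ha ha'
  exact abs_exp_sub_exp_le_of_le (le_of_abs_le ha) (le_of_abs_le ha')

lemma abs_log_integral_exp_div_integral_exp_le [NeZero μ] (hf : AEStronglyMeasurable f μ)
    (hf' : AEStronglyMeasurable f' μ) (hfM : ∀ᵐ a ∂μ, |f a| ≤ M) (hf'M : ∀ᵐ a ∂μ, |f' a| ≤ M) :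
    |log ((∫ a, exp (f a) ∂μ) / ∫ a, exp (f' a) ∂μ)|
      ≤ exp (2 * M) * √(∫ a, (f a - f' a) ^ 2 ∂μ) / √(μ.real Set.univ) := by
  have hV : 0 < μ.real Set.univ := measureReal_univ_pos
  have hc : 0 < exp (-M) * μ.real Set.univ := by positivity
  have hZ := exp_neg_mul_measureReal_univ_le_integral_exp hf hfM
  have hZ' := exp_neg_mul_measureReal_univ_le_integral_exp hf' hf'M
  have hL2 : MemLp (fun a => f a - f' a) 2 μ :=
    (MemLp.of_bound hf M (by simpa using hfM)).sub (MemLp.of_bound hf' M (by simpa using hf'M))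
  rw [log_div (hc.trans_le hZ).ne' (hc.trans_le hZ').ne']
  calc _ ≤ (exp (-M) * μ.real Set.univ)⁻¹ * |∫ a, exp (f a) ∂μ - ∫ a, exp (f' a) ∂μ| :=
        abs_log_sub_log_le_of_le hc hZ hZ'
    _ ≤ (exp (-M) * μ.real Set.univ)⁻¹ *
          (exp M * (√(μ.real Set.univ) * √(∫ a, (f a - f' a) ^ 2 ∂μ))) := by
        gcongr
        exact (abs_integral_exp_sub_integral_exp_le hf hf' hfM hf'M).trans <| by
          gcongr; exact integral_abs_le_sqrt_measureReal_mul_sqrt_integral_sq hL2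
    _ = exp (2 * M) * √(∫ a, (f a - f' a) ^ 2 ∂μ) / √(μ.real Set.univ) := by
        rw [exp_neg, two_mul, exp_add]
        field_simp
        rw [sq_sqrt hV.le]

end PartitionFunction

/-- log-partition-function comparison. For `f, f'` measurable and bounded by `M`
on a compact `A` of finite positive Lebesgue measure, with `Z(f) = ∫_A exp f`,
`|log (Z(f)/Z(f'))| ≤ e^{2M} K ‖f - f'‖_{L²(A)} / |A|^{1/2}` where `K` depends only on `M`
(a Lipschitz constant of `exp` on `[-2M, 2M]`). -/
theorem log_partition_function_lipschitz
    {d : ℕ} (A : Set (EuclideanSpace ℝ (Fin d)))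
    (hA : IsCompact A) (hA0 : 0 < volume A) (hAfin : volume A < ⊤) (M : ℝ) :
    ∃ K : ℝ, 0 < K ∧
      (∀ x ∈ Set.Icc (-(2*M)) (2*M), ∀ y ∈ Set.Icc (-(2*M)) (2*M),
        |Real.exp x - Real.exp y| ≤ K * |x - y|) ∧
      ∀ f f' : EuclideanSpace ℝ (Fin d) → ℝ,
        Measurable f → Measurable f' →
        (∀ a ∈ A, |f a| ≤ M) → (∀ a ∈ A, |f' a| ≤ M) →
        |Real.log ((∫ a in A, Real.exp (f a)) / (∫ a in A, Real.exp (f' a)))|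
          ≤ Real.exp (2*M) * K * Real.sqrt (∫ a in A, (f a - f' a) ^ 2)
              / Real.sqrt ((volume A).toReal) := by
  refine ⟨exp (2 * M), exp_pos _, fun x hx y hy => abs_exp_sub_exp_le_of_le hx.2 hy.2, ?_⟩
  intro f f' hf hf' hfM hf'M
  have : IsFiniteMeasure (volume.restrict A) := isFiniteMeasure_restrict.2 hAfin.ne
  have : NeZero (volume.restrict A) := ⟨by simpa [Measure.restrict_eq_zero] using hA0.ne'⟩
  have hM : 0 ≤ M :=
    have ⟨a, ha⟩ := nonempty_of_measure_ne_zero hA0.ne'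
    (abs_nonneg _).trans (hfM a ha)
  have hae {g : EuclideanSpace ℝ (Fin d) → ℝ} (hg : ∀ a ∈ A, |g a| ≤ M) :
      ∀ᵐ a ∂volume.restrict A, |g a| ≤ M :=
    (ae_restrict_iff' hA.measurableSet).2 (.of_forall hg)
  have h := abs_log_integral_exp_div_integral_exp_le hf.aestronglyMeasurable
    hf'.aestronglyMeasurable (hae hfM) (hae hf'M)
  rw [measureReal_restrict_apply_univ, measureReal_def] at h
  refine h.trans ?_
  gcongr
  exact le_mul_of_one_le_right (exp_pos _).le (one_le_exp (by linarith))
end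

section
/- Suppose ν* is a probability measure on Ω = ℝ × Θ, with ψ(a;(ω₀, ω̄)) = ω₀ φ(a; ω̄), such that (i) the projection of supp(ν*) onto Θ is all of Θ, (ii) the span of {φ(·; ω̄) : ω̄ ∈ Θ} is dense in L²(A), and (iii) for all ω in supp(ν*), ∫_A ∇_ω ψ(a;ω) (r(a) − τ f_{ν*}(a) − V_{ν*}) π_{ν*}(da) = 0, where f_{ν*}(a) = ∫ ψ(a;ω) ν*(dω) is bounded and π_{ν*} = exp(f_{ν*})/Z > 0 on A. Then f_{ν*}(a) = τ^{-1} r(a) + C for a constant C, Lebesgue-a.e. on A, and hence π_{ν*} equals the optimal Boltzmann policy exp(r/τ)/∫exp(r/τ). -/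
/-!
Put `g = (r - τ f - V) π`. The first component of stationarity, available at every `θ` thanks
to the full projected support, says that `g` is orthogonal in `L²(A)` to every feature
`φ(·;θ)`, hence to their dense span, so `g = 0` a.e. Since `π > 0`, this gives
`τ f = r - V` a.e., and a softmax does not change when a constant is added to its logits.
-/

open MeasureTheory Real

/-- The topological support of a measure on `ℝ × Θ`: points all of whose open neighbourhoods
have positive measure. -/
def measSupport {Ω : Type*} [TopologicalSpace Ω] [MeasurableSpace Ω]
    (ν : Measure Ω) : Set Ω :=
  {ω | ∀ U : Set Ω, IsOpen U → ω ∈ U → 0 < ν U}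

theorem eq_zero_of_forall_inner_eq_zero_of_dense_span {𝕜 E : Type*} [RCLike 𝕜]
    [NormedAddCommGroup E] [InnerProductSpace 𝕜 E] {s : Set E}
    (hs : Dense (Submodule.span 𝕜 s : Set E)) {x : E} (h : ∀ v ∈ s, inner 𝕜 v x = 0) :
    x = 0 :=
  hs.eq_zero_of_inner_right 𝕜 fun _ hv =>
    Submodule.span_induction h (by simp) (by simp +contextual [inner_add_left])
      (by simp +contextual [inner_smul_left]) hv

theorem MeasureTheory.MemLp.inner_toLp_eq_integral_mul {α : Type*} [MeasurableSpace α]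
    {μ : Measure α} {f g : α → ℝ} (hf : MemLp f 2 μ) (hg : MemLp g 2 μ) :
    inner ℝ (hf.toLp f) (hg.toLp g) = ∫ a, f a * g a ∂μ := by
  rw [L2.inner_def]
  refine integral_congr_ae ?_
  filter_upwards [hf.coeFn_toLp, hg.coeFn_toLp] with a hfa hga
  rw [hfa, hga, real_inner_eq_re_inner, RCLike.inner_apply]
  simp [mul_comm]

theorem ae_eq_zero_of_forall_integral_mul_eq_zero_of_dense_span {α ι : Type*} [MeasurableSpace α]
    {μ : Measure α} {φ : ι → α → ℝ} (hφ : ∀ i, MemLp (φ i) 2 μ)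
    (hdense : Dense (Submodule.span ℝ (Set.range fun i => (hφ i).toLp (φ i)) :
      Set (Lp ℝ 2 μ)))
    {g : α → ℝ} (hg : MemLp g 2 μ) (h : ∀ i, ∫ a, φ i a * g a ∂μ = 0) : g =ᵐ[μ] 0 := by
  have hzero : hg.toLp g = 0 := by
    refine eq_zero_of_forall_inner_eq_zero_of_dense_span hdense ?_
    rintro _ ⟨i, rfl⟩
    rw [(hφ i).inner_toLp_eq_integral_mul hg, h i]
  exact hg.coeFn_toLp.symm.trans (hzero ▸ Lp.coeFn_zero _ _ _)

theorem measurable_integral_fst_mul {α Θ : Type*} [MeasurableSpace α] [TopologicalSpace Θ]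
    [TopologicalSpace.MetrizableSpace Θ] [SecondCountableTopology Θ] [MeasurableSpace Θ]
    [OpensMeasurableSpace Θ]
    {φ : α → Θ → ℝ} (hcont : ∀ a, Continuous (φ a)) (hmeas : ∀ θ, Measurable fun a => φ a θ)
    (ν : Measure (ℝ × Θ)) [SFinite ν] :
    Measurable fun a => ∫ ω, ω.1 * φ a ω.2 ∂ν := by
  have hφ : Measurable fun p : Θ × α => φ p.2 p.1 :=
    measurable_uncurry_of_continuous_of_measurable (u := fun θ a => φ a θ) hcont hmeas
  have hint : StronglyMeasurable fun p : α × (ℝ × Θ) => p.2.1 * φ p.1 p.2.2 :=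
    ((measurable_fst.comp measurable_snd).mul
      (hφ.comp ((measurable_snd.comp measurable_snd).prodMk measurable_fst))).stronglyMeasurable
  exact hint.integral_prod_right'.measurable

theorem memLp_top_exp_of_abs_le {α : Type*} [MeasurableSpace α] {μ : Measure α} {f : α → ℝ}
    (hf : AEStronglyMeasurable f μ) {M : ℝ} (hM : ∀ᵐ a ∂μ, |f a| ≤ M) :
    MemLp (fun a => exp (f a)) ⊤ μ :=
  memLp_top_of_bound (continuous_exp.comp_aestronglyMeasurable hf) (exp M)
    (hM.mono fun a ha => by simpa using le_of_abs_le ha)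

theorem ae_exp_div_integral_exp_eq_of_ae_eq_add_const {α : Type*} [MeasurableSpace α]
    {μ : Measure α} {f h : α → ℝ} {C : ℝ} (hfh : ∀ᵐ a ∂μ, f a = h a + C) :
    ∀ᵐ a ∂μ, exp (f a) / ∫ a', exp (f a') ∂μ = exp (h a) / ∫ a', exp (h a') ∂μ := by
  have hexp : ∀ᵐ a ∂μ, exp (f a) = exp C * exp (h a) := by
    filter_upwards [hfh] with a ha
    rw [ha, exp_add, mul_comm]
  have hZ : ∫ a, exp (f a) ∂μ = exp C * ∫ a, exp (h a) ∂μ := by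
    rw [integral_congr_ae hexp, integral_const_mul]
  filter_upwards [hexp] with a ha
  rw [ha, hZ, mul_div_mul_left _ _ (exp_ne_zero C)]

theorem bandit_full_support_stationary_is_optimal_general
    {dA k : ℕ} (A : Set (EuclideanSpace ℝ (Fin dA)))
    (hA : IsCompact A) (hA0 : 0 < volume A)
    (τ : ℝ) (hτ : 0 < τ)
    (r : EuclideanSpace ℝ (Fin dA) → ℝ) (hr : Measurable r) (Mr : ℝ)
    (hrb : ∀ a ∈ A, |r a| ≤ Mr)
    (φ : EuclideanSpace ℝ (Fin dA) → EuclideanSpace ℝ (Fin k) → ℝ)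
    (Dφ : EuclideanSpace ℝ (Fin dA) → EuclideanSpace ℝ (Fin k) →
      (EuclideanSpace ℝ (Fin k) →L[ℝ] ℝ))
    (hφmeas : ∀ θ, Measurable (fun a => φ a θ))
    (hφdiff : ∀ a θ, HasFDerivAt (φ a) (Dφ a θ) θ)
    (ν : Measure (ℝ × EuclideanSpace ℝ (Fin k))) [IsProbabilityMeasure ν]
    -- the mean-field energy `f_{ν*}`, assumed bounded, the partition function, the policy,
    -- and the value
    (f : EuclideanSpace ℝ (Fin dA) → ℝ)
    (hf : ∀ a, f a = ∫ ω : ℝ × EuclideanSpace ℝ (Fin k), ω.1 * φ a ω.2 ∂ν)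
    (Mf : ℝ) (hfbd : ∀ a, |f a| ≤ Mf)
    (Z : ℝ) (hZ : Z = ∫ a in A, Real.exp (f a))
    (pol : EuclideanSpace ℝ (Fin dA) → ℝ) (hpol : ∀ a, pol a = Real.exp (f a) / Z)
    (V : ℝ)
    -- (i) full projected support
    (hproj : ∀ θ : EuclideanSpace ℝ (Fin k), ∃ ω₀ : ℝ, (ω₀, θ) ∈ measSupport ν)
    -- (ii) universal approximation: density of the span of the features in L²(A)
    (hφL2 : ∀ θ, MemLp (fun a => φ a θ) 2 (volume.restrict A))
    (hdense : Dense ((Submodule.span ℝ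
        (Set.range fun θ : EuclideanSpace ℝ (Fin k) => (hφL2 θ).toLp (fun a => φ a θ)) :
        Submodule ℝ (Lp ℝ 2 (volume.restrict A))) : Set (Lp ℝ 2 (volume.restrict A))))
    -- (iii) stationarity of the policy gradient field on the support of `ν*`
    (hstat : ∀ ω ∈ measSupport ν,
      ((∫ a in A, φ a ω.2 * ((r a - τ * f a - V) * pol a)) = 0
        ∧ (∫ a in A, ((r a - τ * f a - V) * pol a) • (ω.1 • Dφ a ω.2)) = 0)) :
    ∃ C : ℝ,
      (∀ᵐ a ∂(volume.restrict A), f a = τ⁻¹ * r a + C)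
      ∧ (∀ᵐ a ∂(volume.restrict A),
          pol a = Real.exp (r a / τ) / ∫ a' in A, Real.exp (r a' / τ)) := by
  have hAm : MeasurableSet A := hA.isClosed.measurableSet
  have : IsFiniteMeasure (volume.restrict A) := isFiniteMeasure_restrict.2 hA.measure_lt_top.ne
  have : NeZero (volume.restrict A) := ⟨by simpa [Measure.restrict_eq_zero] using hA0.ne'⟩
  have hfm : Measurable f := funext hf ▸
    measurable_integral_fst_mul (fun a => continuous_iff_continuousAt.2 fun θ =>
      (hφdiff a θ).continuousAt) hφmeas ν
  have hf_top : MemLp f ⊤ (volume.restrict A) :=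
    memLp_top_of_bound hfm.aestronglyMeasurable Mf (ae_of_all _ hfbd)
  have hexp_top : MemLp (fun a => exp (f a)) ⊤ (volume.restrict A) :=
    memLp_top_exp_of_abs_le hfm.aestronglyMeasurable (ae_of_all _ hfbd)
  have hZpos : 0 < Z := hZ ▸ integral_exp_pos (hexp_top.integrable le_top)
  have hpolpos : ∀ a, 0 < pol a := fun a => hpol a ▸ div_pos (exp_pos _) hZpos
  have hpol_top : MemLp pol ⊤ (volume.restrict A) := by
    simpa only [funext hpol, div_eq_mul_inv] using hexp_top.mul_const Z⁻¹
  have hr_top : MemLp r ⊤ (volume.restrict A) :=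
    memLp_top_of_bound hr.aestronglyMeasurable Mr ((ae_restrict_iff' hAm).2 (ae_of_all _ hrb))
  set g := fun a => (r a - τ * f a - V) * pol a
  have hg : MemLp g 2 (volume.restrict A) :=
    (hpol_top.mul' ((hr_top.sub (hf_top.const_mul τ)).sub (memLp_const V))).mono_exponent le_top
  have hg_zero : g =ᵐ[volume.restrict A] 0 :=
    ae_eq_zero_of_forall_integral_mul_eq_zero_of_dense_span hφL2 hdense hg fun θ =>
      (hstat _ (hproj θ).choose_spec).1
  have hf_eq : ∀ᵐ a ∂(volume.restrict A), f a = τ⁻¹ * r a + -(τ⁻¹ * V) := by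
    filter_upwards [hg_zero] with a ha
    have : r a - τ * f a - V = 0 := (mul_eq_zero.1 ha).resolve_right (hpolpos a).ne'
    field_simp
    linarith
  refine ⟨-(τ⁻¹ * V), hf_eq, ?_⟩
  have hf_eq' : ∀ᵐ a ∂(volume.restrict A), f a = r a / τ + -(τ⁻¹ * V) := by
    simpa only [div_eq_inv_mul] using hf_eq
  filter_upwards [ae_exp_div_integral_exp_eq_of_ae_eq_add_const hf_eq'] with a ha
  rw [hpol, hZ, ha]

/-- global optimality of full-support stationary points of mean-field softmax
policy gradient in the bandit setting. If `ν*` on `Ω = ℝ × Θ` has full projected support,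
the features `φ(·;ω̄)` span a dense subspace of `L²(A)`, and the policy gradient field
`∫_A ∇_ω ψ(a;ω)(r(a) − τ f_{ν*}(a) − V_{ν*}) π_{ν*}(da)` vanishes on `supp ν*` (components:
`∇_{ω₀}ψ = φ(·;ω̄)` and `∇_{ω̄}ψ = ω₀ Dφ(·;ω̄)`), then `f_{ν*} = τ⁻¹ r + C` a.e. for a
constant `C`, and `π_{ν*}` is the optimal Boltzmann policy `exp(r/τ)/∫exp(r/τ)`. -/
theorem bandit_full_support_stationary_is_optimal
    {dA k : ℕ} (A : Set (EuclideanSpace ℝ (Fin dA)))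
    (hA : IsCompact A) (hA0 : 0 < volume A) (hAfin : volume A < ⊤)
    (τ : ℝ) (hτ : 0 < τ)
    (r : EuclideanSpace ℝ (Fin dA) → ℝ) (hr : Measurable r) (Mr : ℝ)
    (hrb : ∀ a ∈ A, |r a| ≤ Mr)
    (φ : EuclideanSpace ℝ (Fin dA) → EuclideanSpace ℝ (Fin k) → ℝ)
    (Dφ : EuclideanSpace ℝ (Fin dA) → EuclideanSpace ℝ (Fin k) →
      (EuclideanSpace ℝ (Fin k) →L[ℝ] ℝ))
    (hφmeas : ∀ θ, Measurable (fun a => φ a θ)) (Cφ : ℝ)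
    (hφbd : ∀ a θ, |φ a θ| ≤ Cφ)
    (hφdiff : ∀ a θ, HasFDerivAt (φ a) (Dφ a θ) θ)
    (ν : Measure (ℝ × EuclideanSpace ℝ (Fin k))) [IsProbabilityMeasure ν]
    (hmom : Integrable (fun ω : ℝ × EuclideanSpace ℝ (Fin k) => ω.1) ν)
    -- the mean-field energy `f_{ν*}`, assumed bounded, the partition function, the policy,
    -- and the value
    (f : EuclideanSpace ℝ (Fin dA) → ℝ)
    (hf : ∀ a, f a = ∫ ω : ℝ × EuclideanSpace ℝ (Fin k), ω.1 * φ a ω.2 ∂ν)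
    (Mf : ℝ) (hfbd : ∀ a, |f a| ≤ Mf)
    (Z : ℝ) (hZ : Z = ∫ a in A, Real.exp (f a))
    (pol : EuclideanSpace ℝ (Fin dA) → ℝ) (hpol : ∀ a, pol a = Real.exp (f a) / Z)
    (V : ℝ) (hV : V = ∫ a in A, (r a - τ * Real.log (pol a)) * pol a)
    -- (i) full projected support
    (hproj : ∀ θ : EuclideanSpace ℝ (Fin k), ∃ ω₀ : ℝ, (ω₀, θ) ∈ measSupport ν)
    -- (ii) universal approximation: density of the span of the features in L²(A)
    (hφL2 : ∀ θ, MemLp (fun a => φ a θ) 2 (volume.restrict A))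
    (hdense : Dense ((Submodule.span ℝ
        (Set.range fun θ : EuclideanSpace ℝ (Fin k) => (hφL2 θ).toLp (fun a => φ a θ)) :
        Submodule ℝ (Lp ℝ 2 (volume.restrict A))) : Set (Lp ℝ 2 (volume.restrict A))))
    -- (iii) stationarity of the policy gradient field on the support of `ν*`
    (hstat : ∀ ω ∈ measSupport ν,
      ((∫ a in A, φ a ω.2 * ((r a - τ * f a - V) * pol a)) = 0
        ∧ (∫ a in A, ((r a - τ * f a - V) * pol a) • (ω.1 • Dφ a ω.2)) = 0)) :
    ∃ C : ℝ,
      (∀ᵐ a ∂(volume.restrict A), f a = τ⁻¹ * r a + C)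
      ∧ (∀ᵐ a ∂(volume.restrict A),
          pol a = Real.exp (r a / τ) / ∫ a' in A, Real.exp (r a' / τ)) :=
  bandit_full_support_stationary_is_optimal_general A hA hA0 τ hτ r hr Mr hrb φ Dφ hφmeas hφdiff ν f
    hf Mf hfbd Z hZ pol hpol V hproj hφL2 hdense hstat
end

section
/- Let Q, Q' : S × A → ℝ be bounded measurable functions on compact spaces S, A (A of positive finite Lebesgue measure), τ > 0, γ ∈ (0,1). Define the soft Bellman backup (T^τ Q)(s,a) = r̄(s,a) + γ ∫_S τ log(∫_A exp(Q(s',a')/τ) da') P(s,a,ds'), where P(s,a,·) is a Markov kernel and r̄ bounded. Then ‖T^τ Q − T^τ Q'‖_∞ ≤ γ ‖Q − Q'‖_∞; i.e. T^τ is a γ-contraction in the supremum norm and has a unique bounded fixed point. -/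
open MeasureTheory Real

variable {S : Type*} [MeasurableSpace S] {d : ℕ}

/-- The soft Bellman backup operator
`(T^τ Q)(s,a) = r̄(s,a) + γ ∫_S τ log (∫_A exp(Q(s',a')/τ) da') P(s,a,ds')`. -/
noncomputable def softBellman (A : Set (EuclideanSpace ℝ (Fin d)))
    (rbar : S → EuclideanSpace ℝ (Fin d) → ℝ) (γ τ : ℝ)
    (P : S → EuclideanSpace ℝ (Fin d) → Measure S)
    (Q : S → EuclideanSpace ℝ (Fin d) → ℝ) (s : S) (a : EuclideanSpace ℝ (Fin d)) : ℝ :=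
  rbar s a + γ * ∫ s', τ * Real.log (∫ a' in A, Real.exp (Q s' a' / τ)) ∂(P s a)

/-!
The soft maximum `V f = τ log ∫ exp (f / τ)` is monotone and commutes with adding constants, so
`|f - g| ≤ C` gives `|V f - V g| ≤ C`. Integrating against the probability measure `P(s,a,·)`
and multiplying by `γ` turns this into `|T Q - T Q'| ≤ γ C`. Iterating this bound on two
fixed points `Q, Q'` gives `|Q - Q'| ≤ γⁿ (M + M')` for every `n`, hence `Q = Q'`.
-/

noncomputable def softMax {α : Type*} [MeasurableSpace α] (ν : Measure α) (τ : ℝ)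
    (f : α → ℝ) : ℝ :=
  τ * log (∫ a, exp (f a / τ) ∂ν)

section SoftMax

variable {α : Type*} [MeasurableSpace α] {ν : Measure α} {τ : ℝ} {f g : α → ℝ}

lemma integrable_exp_div_of_le [IsFiniteMeasure ν] (hτ : 0 < τ) (hf : AEMeasurable f ν)
    {M : ℝ} (hM : ∀ a, f a ≤ M) : Integrable (fun a => exp (f a / τ)) ν :=
  .of_bound (hf.div_const τ).exp.aestronglyMeasurable (exp (M / τ)) <| .of_forall fun a => by
    rw [norm_of_nonneg (exp_pos _).le]
    gcongr
    exact hM a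

lemma softMax_le_softMax_add [NeZero ν] (hτ : 0 < τ)
    (hf : Integrable (fun a => exp (f a / τ)) ν) (hg : Integrable (fun a => exp (g a / τ)) ν)
    {C : ℝ} (hfg : ∀ a, f a ≤ g a + C) :
    softMax ν τ f ≤ softMax ν τ g + C := by
  have hexp : ∫ a, exp (f a / τ) ∂ν ≤ exp (C / τ) * ∫ a, exp (g a / τ) ∂ν := by
    rw [← integral_const_mul]
    refine integral_mono hf (hg.const_mul _) fun a => ?_
    rw [← exp_add, ← add_div, add_comm]
    gcongr
    exact hfg a
  have hlog : log (∫ a, exp (f a / τ) ∂ν) ≤ log (∫ a, exp (g a / τ) ∂ν) + C / τ := by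
    calc log (∫ a, exp (f a / τ) ∂ν)
        ≤ log (exp (C / τ) * ∫ a, exp (g a / τ) ∂ν) :=
          log_le_log (integral_exp_pos hf) hexp
      _ = log (∫ a, exp (g a / τ) ∂ν) + C / τ := by
        rw [log_mul (exp_pos _).ne' (integral_exp_pos hg).ne', log_exp, add_comm]
  calc softMax ν τ f ≤ τ * (log (∫ a, exp (g a / τ) ∂ν) + C / τ) := by
        unfold softMax; gcongr
    _ = softMax ν τ g + C := by unfold softMax; field_simp

lemma abs_softMax_sub_softMax_le [NeZero ν] (hτ : 0 < τ)
    (hf : Integrable (fun a => exp (f a / τ)) ν) (hg : Integrable (fun a => exp (g a / τ)) ν)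
    {C : ℝ} (hfg : ∀ a, |f a - g a| ≤ C) : |softMax ν τ f - softMax ν τ g| ≤ C := by
  have h₁ := softMax_le_softMax_add (C := C) hτ hf hg fun a => by
    linarith [(abs_le.1 (hfg a)).2]
  have h₂ := softMax_le_softMax_add (C := C) hτ hg hf fun a => by
    linarith [(abs_le.1 (hfg a)).1]
  rw [abs_le]
  constructor <;> linarith

lemma softMax_zero : softMax ν τ (fun _ => 0) = τ * log (ν.real Set.univ) := by
  simp [softMax]

end SoftMax

section Bellman

variable {α : Type*} [MeasurableSpace α] {ν : Measure α} {τ : ℝ}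

lemma measurable_softMax_of_uncurry [SFinite ν] {Q : S → α → ℝ}
    (hQ : Measurable (Function.uncurry Q)) :
    Measurable fun s => softMax ν τ (Q s) :=
  measurable_const.mul
    ((hQ.div_const τ).exp.stronglyMeasurable.integral_prod_right (ν := ν)).measurable.log

lemma integrable_exp_div_apply_of_abs_le [IsFiniteMeasure ν] (hτ : 0 < τ) {Q : S → α → ℝ}
    (hQ : Measurable (Function.uncurry Q)) {M : ℝ} (hM : ∀ s a, |Q s a| ≤ M) (s : S) :
    Integrable (fun a => exp (Q s a / τ)) ν :=
  integrable_exp_div_of_le hτ (hQ.comp measurable_prodMk_left).aemeasurable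
    fun a => (abs_le.1 (hM s a)).2

lemma integrable_softMax [IsFiniteMeasure ν] [NeZero ν] (hτ : 0 < τ) (μ : Measure S)
    [IsFiniteMeasure μ] {Q : S → α → ℝ} (hQ : Measurable (Function.uncurry Q)) {M : ℝ}
    (hM : ∀ s a, |Q s a| ≤ M) : Integrable (fun s => softMax ν τ (Q s)) μ := by
  refine .of_bound (measurable_softMax_of_uncurry hQ).aestronglyMeasurable
    (M + |τ * log (ν.real Set.univ)|) (.of_forall fun s => ?_)
  have hclose : |softMax ν τ (Q s) - softMax ν τ (fun _ => 0)| ≤ M :=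
    abs_softMax_sub_softMax_le hτ
      (integrable_exp_div_apply_of_abs_le hτ hQ hM s)
      (integrable_exp_div_of_le hτ aemeasurable_const fun _ => le_rfl)
      (by simpa only [sub_zero] using hM s)
  rw [softMax_zero] at hclose
  rw [norm_eq_abs]
  linarith [abs_sub_abs_le_abs_sub (softMax ν τ (Q s)) (τ * log (ν.real Set.univ))]

lemma abs_integral_sub_integral_le {μ : Measure S} [IsProbabilityMeasure μ] {f g : S → ℝ}
    (hf : Integrable f μ) (hg : Integrable g μ) {C : ℝ} (hfg : ∀ s, |f s - g s| ≤ C) :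
    |∫ s, f s ∂μ - ∫ s, g s ∂μ| ≤ C := by
  rw [← integral_sub hf hg]
  simpa using
    norm_integral_le_of_norm_le_const (μ := μ) (f := fun s => f s - g s) (.of_forall hfg)

end Bellman

lemma abs_softBellman_sub_softBellman_le {A : Set (EuclideanSpace ℝ (Fin d))}
    (hA0 : 0 < volume A) (hAfin : volume A < ⊤) {τ γ : ℝ} (hτ : 0 < τ) (hγ : 0 ≤ γ)
    (rbar : S → EuclideanSpace ℝ (Fin d) → ℝ) {P : S → EuclideanSpace ℝ (Fin d) → Measure S}
    (hP : ∀ s a, IsProbabilityMeasure (P s a)) {Q Q' : S → EuclideanSpace ℝ (Fin d) → ℝ}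
    (hQ : Measurable (Function.uncurry Q)) (hQ' : Measurable (Function.uncurry Q'))
    {M M' C : ℝ} (hM : ∀ s a, |Q s a| ≤ M) (hM' : ∀ s a, |Q' s a| ≤ M')
    (hC : ∀ s a, |Q s a - Q' s a| ≤ C) (s : S) (a : EuclideanSpace ℝ (Fin d)) :
    |softBellman A rbar γ τ P Q s a - softBellman A rbar γ τ P Q' s a| ≤ γ * C := by
  have : IsFiniteMeasure (volume.restrict A) := isFiniteMeasure_restrict.2 hAfin.ne
  have : NeZero (volume.restrict A) := ⟨Measure.restrict_eq_zero.not.2 hA0.ne'⟩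
  have hdiff : softBellman A rbar γ τ P Q s a - softBellman A rbar γ τ P Q' s a =
      γ * (∫ s', softMax (volume.restrict A) τ (Q s') ∂P s a -
        ∫ s', softMax (volume.restrict A) τ (Q' s') ∂P s a) := by
    unfold softBellman softMax
    ring
  rw [hdiff, abs_mul, abs_of_nonneg hγ]
  gcongr
  exact abs_integral_sub_integral_le (integrable_softMax hτ _ hQ hM)
    (integrable_softMax hτ _ hQ' hM') fun s' => abs_softMax_sub_softMax_le hτ
      (integrable_exp_div_apply_of_abs_le hτ hQ hM s')
      (integrable_exp_div_apply_of_abs_le hτ hQ' hM' s') (hC s')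

lemma nonpos_of_forall_le_imp_forall_le_mul {ι : Type*} {e : ι → ℝ} {γ B : ℝ} (hγ0 : 0 ≤ γ)
    (hγ1 : γ < 1) (hB : ∀ i, e i ≤ B) (hcontract : ∀ C, (∀ i, e i ≤ C) → ∀ i, e i ≤ γ * C)
    (i : ι) : e i ≤ 0 := by
  have hpow : ∀ n : ℕ, ∀ i, e i ≤ γ ^ n * B := by
    intro n
    induction n with
    | zero => simpa using hB
    | succ n ih => simpa only [pow_succ', mul_assoc] using hcontract _ ih
  have hlim : Filter.Tendsto (fun n : ℕ => γ ^ n * B) Filter.atTop (nhds 0) := by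
    simpa using (tendsto_pow_atTop_nhds_zero_of_lt_one hγ0 hγ1).mul_const B
  exact ge_of_tendsto' hlim fun n => hpow n i

theorem softBellman_contraction_general
    (A : Set (EuclideanSpace ℝ (Fin d)))
    (hA0 : 0 < volume A) (hAfin : volume A < ⊤)
    (τ γ : ℝ) (hτ : 0 < τ) (hγ : γ ∈ Set.Ioo (0:ℝ) 1)
    (rbar : S → EuclideanSpace ℝ (Fin d) → ℝ)
    (P : S → EuclideanSpace ℝ (Fin d) → Measure S)
    (hP : ∀ s a, IsProbabilityMeasure (P s a)) :
    (∀ (Q Q' : S → EuclideanSpace ℝ (Fin d) → ℝ) (C : ℝ),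
      Measurable (Function.uncurry Q) → Measurable (Function.uncurry Q') →
      (∃ M, ∀ s a, |Q s a| ≤ M) → (∃ M, ∀ s a, |Q' s a| ≤ M) →
      (∀ s a, |Q s a - Q' s a| ≤ C) →
      ∀ s a, |softBellman A rbar γ τ P Q s a - softBellman A rbar γ τ P Q' s a| ≤ γ * C)
    ∧ (∀ (Q Q' : S → EuclideanSpace ℝ (Fin d) → ℝ),
        Measurable (Function.uncurry Q) → Measurable (Function.uncurry Q') →
        (∃ M, ∀ s a, |Q s a| ≤ M) → (∃ M, ∀ s a, |Q' s a| ≤ M) →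
        (∀ s a, Q s a = softBellman A rbar γ τ P Q s a) →
        (∀ s a, Q' s a = softBellman A rbar γ τ P Q' s a) →
        Q = Q') := by
  refine ⟨fun Q Q' C hQ hQ' ⟨M, hM⟩ ⟨M', hM'⟩ hC =>
    abs_softBellman_sub_softBellman_le hA0 hAfin hτ hγ.1.le rbar hP hQ hQ' hM hM' hC, ?_⟩
  rintro Q Q' hQ hQ' ⟨M, hM⟩ ⟨M', hM'⟩ hfix hfix'
  have hdist : ∀ p : S × EuclideanSpace ℝ (Fin d), |Q p.1 p.2 - Q' p.1 p.2| ≤ 0 := by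
    refine nonpos_of_forall_le_imp_forall_le_mul hγ.1.le hγ.2 (B := M + M')
      (fun p => (abs_sub _ _).trans (add_le_add (hM _ _) (hM' _ _))) fun C hC p => ?_
    rw [hfix, hfix']
    exact abs_softBellman_sub_softBellman_le hA0 hAfin hτ hγ.1.le rbar hP hQ hQ' hM hM'
      (fun s a => hC (s, a)) p.1 p.2
  funext s a
  exact sub_eq_zero.1 (abs_nonpos_iff.1 (hdist (s, a)))

/-- the soft Bellman backup is a `γ`-contraction in the supremum norm, and has
a unique bounded (measurable) fixed point. -/
theorem softBellman_contraction
    (A : Set (EuclideanSpace ℝ (Fin d)))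
    (hA : IsCompact A) (hA0 : 0 < volume A) (hAfin : volume A < ⊤)
    (τ γ : ℝ) (hτ : 0 < τ) (hγ : γ ∈ Set.Ioo (0:ℝ) 1)
    (rbar : S → EuclideanSpace ℝ (Fin d) → ℝ)
    (hrmeas : Measurable (Function.uncurry rbar)) (Cr : ℝ)
    (hrbd : ∀ s a, |rbar s a| ≤ Cr)
    (P : S → EuclideanSpace ℝ (Fin d) → Measure S)
    (hP : ∀ s a, IsProbabilityMeasure (P s a)) :
    (∀ (Q Q' : S → EuclideanSpace ℝ (Fin d) → ℝ) (C : ℝ),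
      Measurable (Function.uncurry Q) → Measurable (Function.uncurry Q') →
      (∃ M, ∀ s a, |Q s a| ≤ M) → (∃ M, ∀ s a, |Q' s a| ≤ M) →
      (∀ s a, |Q s a - Q' s a| ≤ C) →
      ∀ s a, |softBellman A rbar γ τ P Q s a - softBellman A rbar γ τ P Q' s a| ≤ γ * C)
    ∧ (∀ (Q Q' : S → EuclideanSpace ℝ (Fin d) → ℝ),
        Measurable (Function.uncurry Q) → Measurable (Function.uncurry Q') →
        (∃ M, ∀ s a, |Q s a| ≤ M) → (∃ M, ∀ s a, |Q' s a| ≤ M) →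
        (∀ s a, Q s a = softBellman A rbar γ τ P Q s a) →
        (∀ s a, Q' s a = softBellman A rbar γ τ P Q' s a) →
        Q = Q') :=
  softBellman_contraction_general A hA0 hAfin τ γ hτ hγ rbar P hP
end
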